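/- arXiv:2509.22539 — 2 statements merged into one kernel-verified Lean document; each statement's English description precedes it below -/
import Mathlib

section
/- For a connected simple graph G with at least two vertices, the Randić energy of every vertex v_i satisfies RE_G(v_i) ≤ 1. -/
open Matrix BigOperators Finset
open scoped Classical

/-- `M * Mᴴ` is positive semidefinite. -/
theorem mulConjTranspose_posSemidef {V : Type*} [Fintype V] [DecidableEq V]
    (M : Matrix V V ℝ) : (M * Mᴴ).PosSemidef := by
  simpa using Matrix.posSemidef_conjTranspose_mul_self Mᴴ

/-- The absolute value `|M| = (M M*)^(1/2)` of a matrix. -/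
noncomputable def matAbs {V : Type*} [Fintype V] [DecidableEq V]
    (M : Matrix V V ℝ) : Matrix V V ℝ :=
  (mulConjTranspose_posSemidef M).1.eigenvectorUnitary.1 *
    diagonal (Real.sqrt ∘ (mulConjTranspose_posSemidef M).1.eigenvalues) *
    (star (mulConjTranspose_posSemidef M).1.eigenvectorUnitary : Matrix V V ℝ)

/-- The Randić matrix of a simple graph. -/
noncomputable def randicMatrix {V : Type*} [Fintype V] [DecidableEq V]
    (G : SimpleGraph V) : Matrix V V ℝ :=
  Matrix.of fun i j =>
    if G.Adj i j then 1 / Real.sqrt ((G.degree i : ℝ) * (G.degree j : ℝ)) else 0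

/-- The Randić energy of a vertex: `RE_G(v) = |R(G)|_{vv}`. -/
noncomputable def vertexRE {V : Type*} [Fintype V] [DecidableEq V]
    (G : SimpleGraph V) (i : V) : ℝ :=
  matAbs (randicMatrix G) i i

/-- For a connected graph with at least two vertices, RE_G(v_i) ≤ 1. -/
theorem randic_vertex_energy_le_one {n : ℕ} (hn : 2 ≤ n) (G : SimpleGraph (Fin n))
    (hG : G.Connected) (i : Fin n) :
    vertexRE G i ≤ 1 := by
  classical
  unfold vertexRE
  set R := randicMatrix G with hR
  have hP := mulConjTranspose_posSemidef R
  set A := matAbs R with hAdef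
  have hApsd : A.PosSemidef := by
    have hD : (diagonal (Real.sqrt ∘ hP.1.eigenvalues)).PosSemidef :=
      posSemidef_diagonal_iff.mpr (fun j => Real.sqrt_nonneg _)
    have := hD.mul_mul_conjTranspose_same (hP.1.eigenvectorUnitary : Matrix (Fin n) (Fin n) ℝ)
    rw [hAdef, matAbs, star_eq_conjTranspose]
    exact this
  have hAsq : A * A = R * Rᴴ := by
    have hU : (star (hP.1.eigenvectorUnitary) : Matrix (Fin n) (Fin n) ℝ) *
        (hP.1.eigenvectorUnitary : Matrix (Fin n) (Fin n) ℝ) = 1 := Unitary.coe_star_mul_self _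
    have hDD : diagonal (Real.sqrt ∘ hP.1.eigenvalues) * diagonal (Real.sqrt ∘ hP.1.eigenvalues)
        = diagonal ((RCLike.ofReal ∘ hP.1.eigenvalues : Fin n → ℝ)) := by
      rw [diagonal_mul_diagonal]; congr 1; funext j
      simpa using Real.mul_self_sqrt (hP.eigenvalues_nonneg j)
    have hs := hP.1.spectral_theorem
    rw [Unitary.conjStarAlgAut_apply] at hs
    refine Eq.trans ?_ hs.symm
    rw [← hDD, hAdef, matAbs]
    simp only [Matrix.mul_assoc]
    rw [← Matrix.mul_assoc (star _) _ _, hU, Matrix.one_mul]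
  -- bound on (R * Rᴴ) i i
  have hbound : (R * Rᴴ) i i ≤ 1 := by
    rw [Matrix.mul_apply]
    have hterm : ∀ j, R i j * Rᴴ j i ≤ if G.Adj i j then 1 / (G.degree i : ℝ) else 0 := by
      intro j
      simp only [Matrix.conjTranspose_apply, star_trivial, hR, randicMatrix, Matrix.of_apply]
      by_cases h : G.Adj i j
      · simp only [h, if_true]
        have hdi : (1 : ℝ) ≤ (G.degree i : ℝ) := by
          exact_mod_cast (G.degree_pos_iff_exists_adj i).mpr ⟨j, h⟩
        have hdj : (1 : ℝ) ≤ (G.degree j : ℝ) := by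
          exact_mod_cast (G.degree_pos_iff_exists_adj j).mpr ⟨i, h.symm⟩
        have hnn : (0:ℝ) ≤ (G.degree i : ℝ) * (G.degree j : ℝ) := by positivity
        rw [div_mul_div_comm, one_mul, Real.mul_self_sqrt hnn]
        rw [div_le_div_iff₀ (by nlinarith) (by linarith)]
        nlinarith
      · simp [h]
    calc ∑ j, R i j * Rᴴ j i ≤ ∑ j, (if G.Adj i j then 1 / (G.degree i : ℝ) else 0) :=
          Finset.sum_le_sum fun j _ => hterm j
      _ = (G.degree i : ℝ) * (1 / (G.degree i : ℝ)) := by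
          rw [← Finset.sum_filter, Finset.sum_const, ← SimpleGraph.neighborFinset_eq_filter,
            SimpleGraph.card_neighborFinset_eq_degree, nsmul_eq_mul]
      _ ≤ 1 := by
          rcases eq_or_lt_of_le (Nat.zero_le (G.degree i)) with h0 | h0
          · simp [← h0]
          · have : (0:ℝ) < (G.degree i : ℝ) := by exact_mod_cast h0
            rw [mul_one_div, div_self (ne_of_gt this)]
  -- diagonal inequality
  have hdiag : A i i ^ 2 ≤ (A * A) i i := by
    rw [Matrix.mul_apply]
    have : ∀ j, A i j * A j i = (A i j) ^ 2 := fun j => by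
      rw [← hApsd.1.apply j i, star_trivial, sq]
    calc A i i ^ 2 ≤ ∑ j, (A i j) ^ 2 :=
          Finset.single_le_sum (f := fun j => (A i j) ^ 2)
            (fun j _ => sq_nonneg _) (Finset.mem_univ i)
      _ = ∑ j, A i j * A j i := by simp [this]
  have h0 : 0 ≤ A i i := hApsd.diag_nonneg
  have : A i i ^ 2 ≤ 1 := le_trans hdiag (hAsq ▸ hbound)
  nlinarith
end

section
/- For a connected simple graph G on n vertices, the total Randić energy satisfies 2 R^{(-1)}(G) ≤ RE(G) ≤ Σ_{i=1}^n √( (1/d_i) Σ_{j~i} 1/d_j ), where R^{(-1)}(G) = Σ_{i~j} 1/(d_i d_j) is the general Randić index with exponent −1. -/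
open Matrix BigOperators Finset
open scoped Classical

section Aux

variable {V : Type*} [Fintype V] [DecidableEq V] (G : SimpleGraph V)

lemma randic_herm : (randicMatrix G).IsHermitian := by
  ext i j
  simp only [conjTranspose_apply, randicMatrix, of_apply, star_trivial]
  rw [SimpleGraph.adj_comm, mul_comm ((G.degree j : ℝ))]

lemma randic_transpose : (randicMatrix G)ᵀ = randicMatrix G := by
  ext i j
  simp only [transpose_apply, randicMatrix, of_apply]
  rw [SimpleGraph.adj_comm, mul_comm ((G.degree j : ℝ))]

lemma randic_sq_diag (i : V) :
    ∑ j, randicMatrix G i j * randicMatrix G j i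
      = ∑ j ∈ G.neighborFinset i, 1 / ((G.degree i : ℝ) * (G.degree j : ℝ)) := by
  rw [SimpleGraph.neighborFinset_eq_filter, Finset.sum_filter]
  refine Finset.sum_congr rfl fun j _ => ?_
  simp only [randicMatrix, of_apply]
  by_cases h : G.Adj i j
  · rw [if_pos h, if_pos h, if_pos h.symm, mul_comm ((G.degree j : ℝ)),
      div_mul_div_comm, one_mul,
      Real.mul_self_sqrt (by positivity)]
  · rw [if_neg h, if_neg h, if_neg (fun h' => h h'.symm), mul_zero]

lemma randic_norm_bound (x : V → ℝ) :
    ∑ i, ((randicMatrix G *ᵥ x) i) ^ 2 ≤ ∑ i, (x i) ^ 2 := by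
  have step1 : ∀ i, ((randicMatrix G *ᵥ x) i) ^ 2
      ≤ ∑ j ∈ G.neighborFinset i, (x j) ^ 2 / (G.degree j : ℝ) := by
    intro i
    have hv : (randicMatrix G *ᵥ x) i
        = ∑ j ∈ G.neighborFinset i,
            (1 / Real.sqrt (G.degree i : ℝ)) * (x j / Real.sqrt (G.degree j : ℝ)) := by
      rw [mulVec, dotProduct, SimpleGraph.neighborFinset_eq_filter, Finset.sum_filter]
      refine Finset.sum_congr rfl fun j _ => ?_
      simp only [randicMatrix, of_apply]
      by_cases h : G.Adj i j
      · rw [if_pos h, if_pos h, Real.sqrt_mul (by positivity)]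
        field_simp
      · rw [if_neg h, if_neg h, zero_mul]
    rw [hv]
    calc (∑ j ∈ G.neighborFinset i,
            (1 / Real.sqrt (G.degree i : ℝ)) * (x j / Real.sqrt (G.degree j : ℝ))) ^ 2
        ≤ (∑ _j ∈ G.neighborFinset i, (1 / Real.sqrt (G.degree i : ℝ)) ^ 2)
          * ∑ j ∈ G.neighborFinset i, (x j / Real.sqrt (G.degree j : ℝ)) ^ 2 :=
        Finset.sum_mul_sq_le_sq_mul_sq _ _ _
      _ ≤ 1 * ∑ j ∈ G.neighborFinset i, (x j) ^ 2 / (G.degree j : ℝ) := by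
          have h1 : ∑ _j ∈ G.neighborFinset i, (1 / Real.sqrt (G.degree i : ℝ)) ^ 2 ≤ 1 := by
            rw [Finset.sum_const, SimpleGraph.card_neighborFinset_eq_degree, nsmul_eq_mul,
              div_pow, one_pow, Real.sq_sqrt (by positivity)]
            rcases Nat.eq_zero_or_pos (G.degree i) with h | h
            · simp [h]
            · rw [mul_one_div, div_self (by positivity)]
          have h2 : ∀ j ∈ G.neighborFinset i,
              (x j / Real.sqrt (G.degree j : ℝ)) ^ 2 = (x j) ^ 2 / (G.degree j : ℝ) := by
            intro j _
            rw [div_pow, Real.sq_sqrt (by positivity)]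
          rw [Finset.sum_congr rfl h2]
          exact mul_le_mul_of_nonneg_right h1
            (Finset.sum_nonneg fun j _ => by positivity)
      _ = ∑ j ∈ G.neighborFinset i, (x j) ^ 2 / (G.degree j : ℝ) := one_mul _
  calc ∑ i, ((randicMatrix G *ᵥ x) i) ^ 2
      ≤ ∑ i, ∑ j ∈ G.neighborFinset i, (x j) ^ 2 / (G.degree j : ℝ) :=
        Finset.sum_le_sum fun i _ => step1 i
    _ = ∑ j, (G.degree j : ℝ) * ((x j) ^ 2 / (G.degree j : ℝ)) := by
        simp only [SimpleGraph.neighborFinset_eq_filter, Finset.sum_filter]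
        rw [Finset.sum_comm]
        refine Finset.sum_congr rfl fun j _ => ?_
        have h : ∀ i : V, (if G.Adj i j then (x j) ^ 2 / (G.degree j : ℝ) else 0)
            = (if G.Adj j i then (x j) ^ 2 / (G.degree j : ℝ) else 0) := by
          intro i; rw [SimpleGraph.adj_comm]
        rw [Finset.sum_congr rfl fun i _ => h i, ← Finset.sum_filter,
          ← SimpleGraph.neighborFinset_eq_filter, Finset.sum_const,
          SimpleGraph.card_neighborFinset_eq_degree, nsmul_eq_mul]
    _ ≤ ∑ j, (x j) ^ 2 := by
        refine Finset.sum_le_sum fun j _ => ?_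
        rcases Nat.eq_zero_or_pos (G.degree j) with h | h
        · simp [h]; positivity
        · rw [mul_div_cancel₀ _ (by positivity)]

end Aux

/-- `2 R^{(-1)}(G) ≤ RE(G) ≤ Σ_i √((1/d_i) Σ_{j~i} 1/d_j)`, where
`R^{(-1)}(G) = Σ_{i~j} 1/(d_i d_j)` is the general Randić index with exponent −1. -/
theorem randic_energy_bounds {n : ℕ} (hn : 2 ≤ n) (G : SimpleGraph (Fin n))
    (hG : G.Connected) :
    2 * ((1 : ℝ) / 2 * ∑ i, ∑ j ∈ G.neighborFinset i,
        1 / ((G.degree i : ℝ) * (G.degree j : ℝ))) ≤ ∑ i, vertexRE G i ∧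
    ∑ i, vertexRE G i ≤
      ∑ i, Real.sqrt ((1 / (G.degree i : ℝ)) *
        ∑ j ∈ G.neighborFinset i, 1 / (G.degree j : ℝ)) := by
  have hR : (randicMatrix G).IsHermitian := randic_herm G
  have hpsd := mulConjTranspose_posSemidef (randicMatrix G)
  have hA : (matAbs (randicMatrix G)).PosSemidef := by
    unfold matAbs
    rw [Matrix.star_eq_conjTranspose]
    exact (posSemidef_diagonal_iff.mpr fun i => Real.sqrt_nonneg _).mul_mul_conjTranspose_same _
  have hAH : (matAbs (randicMatrix G)).IsHermitian := hA.1
  have hAA : matAbs (randicMatrix G) * matAbs (randicMatrix G)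
      = randicMatrix G * randicMatrix G := by
    have h : matAbs (randicMatrix G) * matAbs (randicMatrix G)
        = randicMatrix G * (randicMatrix G)ᴴ := by
        have hs := hpsd.1.spectral_theorem
        have hU := mem_unitaryGroup_iff'.mp hpsd.1.eigenvectorUnitary.2
        rw [Unitary.conjStarAlgAut_apply] at hs
        conv_rhs => rw [hs]
        unfold matAbs
        have hD : diagonal (Real.sqrt ∘ hpsd.1.eigenvalues) * diagonal (Real.sqrt ∘ hpsd.1.eigenvalues)
            = diagonal (RCLike.ofReal ∘ hpsd.1.eigenvalues) := by
          rw [diagonal_mul_diagonal]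
          congr 1
          funext k
          simp only [Function.comp_apply, RCLike.ofReal_real_eq_id, id]
          exact Real.mul_self_sqrt (hpsd.eigenvalues_nonneg k)
        rw [← hD]
        simp only [mul_assoc]
        rw [← mul_assoc (star _) _, hU, one_mul]
    rwa [show (randicMatrix G)ᴴ = randicMatrix G from hR] at h
  set A := matAbs (randicMatrix G) with hAdef
  -- diagonal of A*A
  have hAAdiag : ∀ i, (A * A) i i
      = ∑ j ∈ G.neighborFinset i, 1 / ((G.degree i : ℝ) * (G.degree j : ℝ)) := by
    intro i
    rw [hAA, mul_apply, randic_sq_diag]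
  -- eigenvalues of A
  set μ : Fin n → ℝ := hAH.eigenvalues with hμdef
  have hμ0 : ∀ k, 0 ≤ μ k := fun k => hA.eigenvalues_nonneg k
  have hμsq : ∀ k, μ k * μ k ≤ μ k := by
    intro k
    have hv := hAH.mulVec_eigenvectorBasis k
    set v : Fin n → ℝ := ⇑(hAH.eigenvectorBasis k) with hvdef
    have hnorm : ∑ i, v i * v i = 1 := by
      have h := orthonormal_iff_ite.mp hAH.eigenvectorBasis.orthonormal k k
      simp only [if_pos rfl] at h
      rw [PiLp.inner_apply] at h
      simp only [hvdef, ← sq]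
      simpa using h
    have hRv : randicMatrix G *ᵥ (randicMatrix G *ᵥ v) = (μ k * μ k) • v := by
      rw [mulVec_mulVec, ← hAA, ← mulVec_mulVec, hv, mulVec_smul, hv, smul_smul]
    have hkey := randic_norm_bound G v
    have hL : ∑ i, ((randicMatrix G *ᵥ v) i) ^ 2 = μ k * μ k := by
      have h1 : ∑ i, ((randicMatrix G *ᵥ v) i) ^ 2
          = (randicMatrix G *ᵥ v) ⬝ᵥ (randicMatrix G *ᵥ v) := by
        simp [dotProduct, sq]
      rw [h1, dotProduct_mulVec, ← mulVec_transpose, randic_transpose, hRv,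
        smul_dotProduct, smul_eq_mul]
      rw [show v ⬝ᵥ v = ∑ i, v i * v i from rfl, hnorm, mul_one]
    have hsq1 : μ k * μ k ≤ 1 := by
      rw [← hL]
      calc ∑ i, ((randicMatrix G *ᵥ v) i) ^ 2 ≤ ∑ i, (v i) ^ 2 := hkey
        _ = 1 := by simp only [pow_two]; exact hnorm
    nlinarith [hμ0 k]
  -- traces
  set U : Matrix (Fin n) (Fin n) ℝ := (hAH.eigenvectorUnitary : Matrix (Fin n) (Fin n) ℝ) with hUdef
  have hU2 : star U * U = 1 := mem_unitaryGroup_iff'.mp hAH.eigenvectorUnitary.2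
  have hspec : A = U * diagonal μ * star U := by
    have h := hAH.spectral_theorem
    simpa [RCLike.ofReal_real_eq_id] using h
  have htr1 : A.trace = ∑ k, μ k := by
    rw [hspec, trace_mul_comm, ← mul_assoc, hU2, one_mul, trace_diagonal]
  have htr2 : (A * A).trace = ∑ k, μ k * μ k := by
    have h : (U * diagonal μ * star U) * (U * diagonal μ * star U)
        = U * (diagonal μ * diagonal μ) * star U := by
      simp only [mul_assoc]
      rw [← mul_assoc (star U) U, hU2, one_mul]
    rw [hspec, h, trace_mul_comm, ← mul_assoc, hU2, one_mul,
      diagonal_mul_diagonal, trace_diagonal]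
  have htrsum : A.trace = ∑ i, vertexRE G i := by
    simp [Matrix.trace, Matrix.diag, vertexRE, hAdef]
  have htrAA : (A * A).trace
      = ∑ i, ∑ j ∈ G.neighborFinset i, 1 / ((G.degree i : ℝ) * (G.degree j : ℝ)) := by
    rw [Matrix.trace]
    exact Finset.sum_congr rfl fun i _ => hAAdiag i
  constructor
  · -- lower bound
    have h2 : 2 * ((1 : ℝ) / 2 * ∑ i, ∑ j ∈ G.neighborFinset i,
        1 / ((G.degree i : ℝ) * (G.degree j : ℝ)))
        = ∑ i, ∑ j ∈ G.neighborFinset i, 1 / ((G.degree i : ℝ) * (G.degree j : ℝ)) := by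
      ring
    rw [h2, ← htrAA, ← htrsum, htr2, htr1]
    exact Finset.sum_le_sum fun k _ => hμsq k
  · -- upper bound
    refine Finset.sum_le_sum fun i _ => ?_
    have h1 : (A i i) ^ 2 ≤ (A * A) i i := by
      rw [mul_apply]
      have hsym : ∀ j, A j i = A i j := fun j => (hAH.apply i j).symm.trans (star_trivial _).symm |>.symm
      calc (A i i) ^ 2 ≤ ∑ j, (A i j) ^ 2 :=
          Finset.single_le_sum (f := fun j => (A i j) ^ 2)
            (fun j _ => sq_nonneg _) (Finset.mem_univ i)
        _ = ∑ j, A i j * A j i := Finset.sum_congr rfl fun j _ => by rw [hsym j, sq]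
    have h2 : (A * A) i i = (1 / (G.degree i : ℝ)) *
        ∑ j ∈ G.neighborFinset i, 1 / (G.degree j : ℝ) := by
      rw [hAAdiag i, Finset.mul_sum]
      exact Finset.sum_congr rfl fun j _ => by
        rw [div_mul_div_comm, one_mul]
    have := Real.le_sqrt_of_sq_le (h2 ▸ h1)
    simpa [vertexRE, hAdef] using this
end
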